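/- arXiv:2509.10364 — 7 statements merged into one kernel-verified Lean document; each statement's English description precedes it below -/
import Mathlib

section
/- Let V be a finite-dimensional complex inner product space equipped with linear operators Q⁺, Q⁻ (odd) satisfying Q⁺∘Q⁺ = 0, Q⁻∘Q⁻ = 0, Q⁺∘Q⁻ + Q⁻∘Q⁺ = 0, and such that the adjoints satisfy (Q⁺)†∘Q⁻ + Q⁻∘(Q⁺)† = 0, (Q⁻)†∘Q⁺ + Q⁺∘(Q⁻)† = 0, and Q⁺∘(Q⁺)† + (Q⁺)†∘Q⁺ = Q⁻∘(Q⁻)† + (Q⁻)†∘Q⁻ =: Δ. Then V decomposes as the orthogonal direct sum V = ker Δ ⊕ im Q⁺ ⊕ im (Q⁺)†, and also V = ker Δ ⊕ im Q⁻ ⊕ im (Q⁻)†. -/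
/-!
The kernel of `Δ = Q Q† + Q† Q` is `ker Q ∩ ker Q†`, since `⟪Δ x, x⟫ = ‖Q† x‖² + ‖Q x‖²`.
As `ker Q = (range Q†)ᗮ` and `ker Q† = (range Q)ᗮ`, this says `ker Δ = (range Q ⊔ range Q†)ᗮ`,
which in finite dimension gives the decomposition `V = ker Δ ⊔ range Q ⊔ range Q†`.
Finally `Q² = 0` puts `range Q` inside `ker Q = (range Q†)ᗮ`.
-/

open LinearMap (adjoint)

section HodgeLaplacian

open Submodule

variable {𝕜 V : Type*} [RCLike 𝕜] [NormedAddCommGroup V] [InnerProductSpace 𝕜 V]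
    [FiniteDimensional 𝕜 V]

noncomputable def hodgeLaplacian (Q : V →ₗ[𝕜] V) : V →ₗ[𝕜] V :=
  Q ∘ₗ adjoint Q + adjoint Q ∘ₗ Q

theorem inner_hodgeLaplacian_self (Q : V →ₗ[𝕜] V) (x : V) :
    inner 𝕜 (hodgeLaplacian Q x) x = ((‖adjoint Q x‖ ^ 2 + ‖Q x‖ ^ 2 : ℝ) : 𝕜) := by
  rw [hodgeLaplacian, LinearMap.add_apply, LinearMap.comp_apply, LinearMap.comp_apply,
    inner_add_left, ← LinearMap.adjoint_inner_right Q, LinearMap.adjoint_inner_left Q x,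
    inner_self_eq_norm_sq_to_K, inner_self_eq_norm_sq_to_K]
  push_cast
  rfl

theorem ker_hodgeLaplacian (Q : V →ₗ[𝕜] V) :
    LinearMap.ker (hodgeLaplacian Q) = LinearMap.ker Q ⊓ LinearMap.ker (adjoint Q) := by
  ext x
  simp only [LinearMap.mem_ker, mem_inf]
  constructor
  · intro hx
    have hnorm : ‖adjoint Q x‖ ^ 2 + ‖Q x‖ ^ 2 = 0 := by
      have hinner := inner_hodgeLaplacian_self Q x
      rw [hx, inner_zero_left] at hinner
      exact_mod_cast hinner.symm
    rw [add_eq_zero_iff_of_nonneg (by positivity) (by positivity)] at hnorm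
    simpa using hnorm.symm
  · rintro ⟨hQx, hQadx⟩
    simp [hodgeLaplacian, hQx, hQadx]

theorem ker_hodgeLaplacian_eq_orthogonal (Q : V →ₗ[𝕜] V) :
    LinearMap.ker (hodgeLaplacian Q) = (LinearMap.range Q ⊔ LinearMap.range (adjoint Q))ᗮ := by
  rw [ker_hodgeLaplacian, ← inf_orthogonal, LinearMap.orthogonal_range,
    LinearMap.orthogonal_range, LinearMap.adjoint_adjoint, inf_comm]

theorem ker_hodgeLaplacian_isOrtho_range (Q : V →ₗ[𝕜] V) :
    LinearMap.ker (hodgeLaplacian Q) ⟂ LinearMap.range Q := by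
  rw [ker_hodgeLaplacian_eq_orthogonal]
  exact (isOrtho_orthogonal_left _).mono_right le_sup_left

theorem ker_hodgeLaplacian_isOrtho_range_adjoint (Q : V →ₗ[𝕜] V) :
    LinearMap.ker (hodgeLaplacian Q) ⟂ LinearMap.range (adjoint Q) := by
  rw [ker_hodgeLaplacian_eq_orthogonal]
  exact (isOrtho_orthogonal_left _).mono_right le_sup_right

theorem range_isOrtho_range_adjoint {Q : V →ₗ[𝕜] V} (hQ : Q ∘ₗ Q = 0) :
    LinearMap.range Q ⟂ LinearMap.range (adjoint Q) := by
  rw [isOrtho_iff_le, LinearMap.orthogonal_range, LinearMap.adjoint_adjoint,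
    LinearMap.range_le_ker_iff, hQ]

theorem ker_hodgeLaplacian_sup_range_sup_range_adjoint (Q : V →ₗ[𝕜] V) :
    LinearMap.ker (hodgeLaplacian Q) ⊔ LinearMap.range Q ⊔ LinearMap.range (adjoint Q) = ⊤ := by
  rw [sup_assoc, ker_hodgeLaplacian_eq_orthogonal, sup_comm]
  exact sup_orthogonal_of_hasOrthogonalProjection

theorem hodge_decomposition {Q : V →ₗ[𝕜] V} (hQ : Q ∘ₗ Q = 0) {Δ : V →ₗ[𝕜] V}
    (hΔ : Q ∘ₗ adjoint Q + adjoint Q ∘ₗ Q = Δ) :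
    (∀ x ∈ LinearMap.ker Δ, ∀ y ∈ LinearMap.range Q, inner 𝕜 x y = 0) ∧
      (∀ x ∈ LinearMap.ker Δ, ∀ y ∈ LinearMap.range (adjoint Q), inner 𝕜 x y = 0) ∧
      (∀ x ∈ LinearMap.range Q, ∀ y ∈ LinearMap.range (adjoint Q), inner 𝕜 x y = 0) ∧
      LinearMap.ker Δ ⊔ LinearMap.range Q ⊔ LinearMap.range (adjoint Q) = ⊤ := by
  obtain rfl : hodgeLaplacian Q = Δ := hΔ
  exact ⟨isOrtho_iff_inner_eq.mp (ker_hodgeLaplacian_isOrtho_range Q),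
    isOrtho_iff_inner_eq.mp (ker_hodgeLaplacian_isOrtho_range_adjoint Q),
    isOrtho_iff_inner_eq.mp (range_isOrtho_range_adjoint hQ),
    ker_hodgeLaplacian_sup_range_sup_range_adjoint Q⟩

end HodgeLaplacian

theorem stmt0_general {V : Type*} [NormedAddCommGroup V] [InnerProductSpace ℂ V]
    [FiniteDimensional ℂ V]
    (Qp Qm : V →ₗ[ℂ] V)
    (hQp : Qp ∘ₗ Qp = 0) (hQm : Qm ∘ₗ Qm = 0)
    (Δ : V →ₗ[ℂ] V)
    (hΔp : Qp ∘ₗ adjoint Qp + adjoint Qp ∘ₗ Qp = Δ)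
    (hΔm : Qm ∘ₗ adjoint Qm + adjoint Qm ∘ₗ Qm = Δ) :
    ((∀ x ∈ LinearMap.ker Δ, ∀ y ∈ LinearMap.range Qp, (inner ℂ x y : ℂ) = 0) ∧
      (∀ x ∈ LinearMap.ker Δ, ∀ y ∈ LinearMap.range (adjoint Qp), (inner ℂ x y : ℂ) = 0) ∧
      (∀ x ∈ LinearMap.range Qp, ∀ y ∈ LinearMap.range (adjoint Qp), (inner ℂ x y : ℂ) = 0) ∧
      LinearMap.ker Δ ⊔ LinearMap.range Qp ⊔ LinearMap.range (adjoint Qp) = ⊤) ∧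
    ((∀ x ∈ LinearMap.ker Δ, ∀ y ∈ LinearMap.range Qm, (inner ℂ x y : ℂ) = 0) ∧
      (∀ x ∈ LinearMap.ker Δ, ∀ y ∈ LinearMap.range (adjoint Qm), (inner ℂ x y : ℂ) = 0) ∧
      (∀ x ∈ LinearMap.range Qm, ∀ y ∈ LinearMap.range (adjoint Qm), (inner ℂ x y : ℂ) = 0) ∧
      LinearMap.ker Δ ⊔ LinearMap.range Qm ⊔ LinearMap.range (adjoint Qm) = ⊤) :=
  ⟨hodge_decomposition hQp hΔp, hodge_decomposition hQm hΔm⟩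

/-- Hodge decomposition for a pair of anticommuting square-zero operators on a
finite-dimensional complex inner product space: `V` is the orthogonal direct sum
`ker Δ ⊕ im Q⁺ ⊕ im (Q⁺)†`, and likewise for `Q⁻`. -/
theorem stmt0 {V : Type*} [NormedAddCommGroup V] [InnerProductSpace ℂ V]
    [FiniteDimensional ℂ V]
    (Qp Qm : V →ₗ[ℂ] V)
    (hQp : Qp ∘ₗ Qp = 0) (hQm : Qm ∘ₗ Qm = 0)
    (hanti : Qp ∘ₗ Qm + Qm ∘ₗ Qp = 0)
    (hadj1 : adjoint Qp ∘ₗ Qm + Qm ∘ₗ adjoint Qp = 0)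
    (hadj2 : adjoint Qm ∘ₗ Qp + Qp ∘ₗ adjoint Qm = 0)
    (Δ : V →ₗ[ℂ] V)
    (hΔp : Qp ∘ₗ adjoint Qp + adjoint Qp ∘ₗ Qp = Δ)
    (hΔm : Qm ∘ₗ adjoint Qm + adjoint Qm ∘ₗ Qm = Δ) :
    ((∀ x ∈ LinearMap.ker Δ, ∀ y ∈ LinearMap.range Qp, (inner ℂ x y : ℂ) = 0) ∧
      (∀ x ∈ LinearMap.ker Δ, ∀ y ∈ LinearMap.range (adjoint Qp), (inner ℂ x y : ℂ) = 0) ∧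
      (∀ x ∈ LinearMap.range Qp, ∀ y ∈ LinearMap.range (adjoint Qp), (inner ℂ x y : ℂ) = 0) ∧
      LinearMap.ker Δ ⊔ LinearMap.range Qp ⊔ LinearMap.range (adjoint Qp) = ⊤) ∧
    ((∀ x ∈ LinearMap.ker Δ, ∀ y ∈ LinearMap.range Qm, (inner ℂ x y : ℂ) = 0) ∧
      (∀ x ∈ LinearMap.ker Δ, ∀ y ∈ LinearMap.range (adjoint Qm), (inner ℂ x y : ℂ) = 0) ∧
      (∀ x ∈ LinearMap.range Qm, ∀ y ∈ LinearMap.range (adjoint Qm), (inner ℂ x y : ℂ) = 0) ∧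
      LinearMap.ker Δ ⊔ LinearMap.range Qm ⊔ LinearMap.range (adjoint Qm) = ⊤) :=
  stmt0_general Qp Qm hQp hQm Δ hΔp hΔm
end

section
/- (Q⁻Q⁺ lemma, finite-dimensional version) Let V be a finite-dimensional complex inner product space with anticommuting square-zero operators Q⁺, Q⁻ satisfying the Hodge relations [Qᵅ, (Qᵝ)†] = δᵅᵝ Δ. If x ∈ V satisfies Q⁻x = 0, Q⁺x = 0, and x = Q⁻x' for some x' (or x = Q⁺x' for some x'), then there exists x̃ ∈ V with x = Q⁻Q⁺x̃. -/
open LinearMap (adjoint)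

open scoped InnerProductSpace

/-- The `Q⁻Q⁺` lemma (finite-dimensional version): if `x` is closed for both
differentials and exact for one of them, then `x = Q⁻Q⁺xt` for some `xt`. -/
theorem stmt3 {V : Type*} [NormedAddCommGroup V] [InnerProductSpace ℂ V]
    [FiniteDimensional ℂ V]
    (Qp Qm : V →ₗ[ℂ] V)
    (hQp : Qp ∘ₗ Qp = 0) (hQm : Qm ∘ₗ Qm = 0)
    (hanti : Qp ∘ₗ Qm + Qm ∘ₗ Qp = 0)
    (hadjcross : Qp ∘ₗ adjoint Qm + adjoint Qm ∘ₗ Qp = 0)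
    (Δ : V →ₗ[ℂ] V)
    (hΔp : Qp ∘ₗ adjoint Qp + adjoint Qp ∘ₗ Qp = Δ)
    (hΔm : Qm ∘ₗ adjoint Qm + adjoint Qm ∘ₗ Qm = Δ)
    (x : V) (hxm : Qm x = 0) (hxp : Qp x = 0)
    (hexact : (∃ x', x = Qm x') ∨ (∃ x', x = Qp x')) :
    ∃ xt : V, x = Qm (Qp xt) := by
  -- pointwise versions of hypotheses
  have hQp' : ∀ v, Qp (Qp v) = 0 := fun v => by
    simpa using LinearMap.ext_iff.mp hQp v
  have hQm' : ∀ v, Qm (Qm v) = 0 := fun v => by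
    simpa using LinearMap.ext_iff.mp hQm v
  have hΔp' : ∀ v, Qp (adjoint Qp v) + adjoint Qp (Qp v) = Δ v := fun v => by
    simpa using LinearMap.ext_iff.mp hΔp v
  have hΔm' : ∀ v, Qm (adjoint Qm v) + adjoint Qm (Qm v) = Δ v := fun v => by
    simpa using LinearMap.ext_iff.mp hΔm v
  have hcross' : ∀ v, Qp (adjoint Qm v) = - adjoint Qm (Qp v) := fun v => by
    have h := LinearMap.ext_iff.mp hadjcross v
    simp only [LinearMap.add_apply, LinearMap.comp_apply, LinearMap.zero_apply] at h
    exact eq_neg_of_add_eq_zero_left h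
  -- adjoint of hadjcross
  have hadjcross2 : Qm ∘ₗ adjoint Qp + adjoint Qp ∘ₗ Qm = 0 := by
    have h := congrArg (adjoint (E := V) (F := V)) hadjcross
    simpa using h
  have hcross2 : ∀ v, Qm (adjoint Qp v) = - adjoint Qp (Qm v) := fun v => by
    have h := LinearMap.ext_iff.mp hadjcross2 v
    simp only [LinearMap.add_apply, LinearMap.comp_apply, LinearMap.zero_apply] at h
    exact eq_neg_of_add_eq_zero_left h
  -- adjoint of hQm (for the commutation Δ (adjoint Qm v) = adjoint Qm (Δ v))
  have hMM : ∀ v, adjoint Qm (adjoint Qm v) = 0 := fun v => by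
    have h : adjoint Qm ∘ₗ adjoint Qm = 0 := by
      have := congrArg (adjoint (E := V) (F := V)) hQm
      simpa using this
    simpa using LinearMap.ext_iff.mp h v
  -- Δ is self-adjoint
  have hadjΔ : adjoint Δ = Δ := by
    rw [← hΔp]
    simp only [map_add, LinearMap.adjoint_comp, LinearMap.adjoint_adjoint]
  -- commutation relations
  have commΔp : ∀ v, Qp (Δ v) = Δ (Qp v) := fun v => by
    rw [← hΔp' v, ← hΔp' (Qp v)]
    simp [hQp', hQp' v]
  have commΔm : ∀ v, Qm (Δ v) = Δ (Qm v) := fun v => by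
    rw [← hΔm' v, ← hΔm' (Qm v)]
    simp [hQm', hQm' v]
  have commΔM : ∀ v, Δ (adjoint Qm v) = adjoint Qm (Δ v) := fun v => by
    rw [← hΔm' v, ← hΔm' (adjoint Qm v)]
    simp [hMM, hMM v]
  -- harmonic vectors are annihilated by all four operators
  have harm : ∀ v, Δ v = 0 →
      Qp v = 0 ∧ adjoint Qp v = 0 ∧ Qm v = 0 ∧ adjoint Qm v = 0 := by
    intro v hv
    have key : ∀ (f : V →ₗ[ℂ] V), (∀ u, f (adjoint f u) + adjoint f (f u) = Δ u) →
        f v = 0 ∧ adjoint f v = 0 := by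
      intro f hf
      have h0 : ⟪f (adjoint f v) + adjoint f (f v), v⟫_ℂ = 0 := by
        rw [hf v, hv, inner_zero_left]
      rw [inner_add_left] at h0
      have e1 : ⟪f (adjoint f v), v⟫_ℂ = ⟪adjoint f v, adjoint f v⟫_ℂ :=
        (LinearMap.adjoint_inner_right f _ _).symm
      have e2 : ⟪adjoint f (f v), v⟫_ℂ = ⟪f v, f v⟫_ℂ :=
        LinearMap.adjoint_inner_left f _ _
      rw [e1, e2, inner_self_eq_norm_sq_to_K, inner_self_eq_norm_sq_to_K] at h0
      have hr : (‖adjoint f v‖ : ℝ) ^ 2 + (‖f v‖ : ℝ) ^ 2 = 0 := by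
        have := congrArg Complex.re h0
        simpa [← Complex.ofReal_pow] using this
      have h1 : ‖f v‖ = 0 := by nlinarith [norm_nonneg (f v), norm_nonneg (adjoint f v)]
      have h2 : ‖adjoint f v‖ = 0 := by
        nlinarith [norm_nonneg (f v), norm_nonneg (adjoint f v)]
      exact ⟨norm_eq_zero.mp h1, norm_eq_zero.mp h2⟩
    obtain ⟨hp1, hp2⟩ := key Qp hΔp'
    obtain ⟨hm1, hm2⟩ := key Qm hΔm'
    exact ⟨hp1, hp2, hm1, hm2⟩
  -- `x` is in the range of `Δ ∘ Δ`
  set T : V →ₗ[ℂ] V := Δ ∘ₗ Δ with hT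
  have hTself : ∀ u v, ⟪T u, v⟫_ℂ = ⟪u, T v⟫_ℂ := by
    intro u v
    have : adjoint T = T := by rw [hT]; simp [hadjΔ]
    calc ⟪T u, v⟫_ℂ = ⟪adjoint T u, v⟫_ℂ := by rw [this]
      _ = ⟪u, T v⟫_ℂ := LinearMap.adjoint_inner_left T _ _
  have kerT : ∀ v, T v = 0 → Δ v = 0 := by
    intro v hv
    have h0 : ⟪Δ v, Δ v⟫_ℂ = 0 := by
      have : ⟪Δ (Δ v), v⟫_ℂ = 0 := by
        have : T v = Δ (Δ v) := rfl
        rw [← this, hv, inner_zero_left]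
      calc ⟪Δ v, Δ v⟫_ℂ = ⟪adjoint Δ (Δ v), v⟫_ℂ := by
            rw [LinearMap.adjoint_inner_left]
        _ = ⟪Δ (Δ v), v⟫_ℂ := by rw [hadjΔ]
        _ = 0 := this
    exact inner_self_eq_zero.mp h0
  have hxrange : x ∈ LinearMap.range T := by
    have horth : x ∈ (LinearMap.range T)ᗮᗮ := by
      rw [Submodule.mem_orthogonal]
      intro u hu
      rw [Submodule.mem_orthogonal] at hu
      -- u is orthogonal to range T, hence T u = 0, hence Δ u = 0
      have hTu : T u = 0 := by
        have h0 := hu (T (T u)) ⟨T u, rfl⟩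
        rw [hTself (T u) u] at h0
        exact inner_self_eq_zero.mp h0
      have hΔu : Δ u = 0 := kerT u hTu
      obtain ⟨_, hPu, _, hMu⟩ := harm u hΔu
      rcases hexact with ⟨x', hx'⟩ | ⟨x', hx'⟩
      · rw [hx']
        calc ⟪u, Qm x'⟫_ℂ = ⟪adjoint Qm u, x'⟫_ℂ := by
              rw [LinearMap.adjoint_inner_left]
          _ = 0 := by rw [hMu, inner_zero_left]
      · rw [hx']
        calc ⟪u, Qp x'⟫_ℂ = ⟪adjoint Qp u, x'⟫_ℂ := by
              rw [LinearMap.adjoint_inner_left]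
          _ = 0 := by rw [hPu, inner_zero_left]
    rwa [Submodule.orthogonal_orthogonal] at horth
  obtain ⟨w, hw⟩ := hxrange
  have hx : x = Δ (Δ w) := hw.symm
  -- harmonicity of Qp w and Qm w
  have hΔQpw : Δ (Qp w) = 0 := by
    apply kerT
    show Δ (Δ (Qp w)) = 0
    rw [← commΔp, ← commΔp, ← hx, hxp]
  have hΔQmw : Δ (Qm w) = 0 := by
    apply kerT
    show Δ (Δ (Qm w)) = 0
    rw [← commΔm, ← commΔm, ← hx, hxm]
  obtain ⟨_, _, hQmQpw, _⟩ := harm (Qp w) hΔQpw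
  -- the witness
  refine ⟨adjoint Qp (adjoint Qm w), ?_⟩
  have step1 : Qp (adjoint Qp (adjoint Qm w)) =
      adjoint Qm (Δ w) + adjoint Qp (adjoint Qm (Qp w)) := by
    have h1 := hΔp' (adjoint Qm w)
    have h2 : adjoint Qp (Qp (adjoint Qm w)) = - adjoint Qp (adjoint Qm (Qp w)) := by
      rw [hcross' w, map_neg]
    have h3 : Δ (adjoint Qm w) = adjoint Qm (Δ w) := commΔM w
    have := h1
    rw [h2] at this
    rw [h3] at this
    linear_combination (norm := abel) this
  rw [step1, map_add]
  have termA : Qm (adjoint Qm (Δ w)) = x := by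
    have h1 := hΔm' (Δ w)
    have h2 : Qm (Δ w) = 0 := by rw [commΔm, hΔQmw]
    rw [h2, map_zero, add_zero] at h1
    rw [h1, ← hx]
  have termB : Qm (adjoint Qp (adjoint Qm (Qp w))) = 0 := by
    rw [hcross2]
    have h1 := hΔm' (Qp w)
    rw [hQmQpw, map_zero, add_zero, hΔQpw] at h1
    rw [h1, map_zero, neg_zero]
  rw [termA, termB, add_zero]
end

section
/- Let V be a vector space (e.g., a finite-dimensional complex vector space or a module over a ring) with two commuting (in the graded sense: Q⁻Q⁺ + Q⁺Q⁻ = 0) square-zero operators Q⁻, Q⁺ satisfying the Q⁻Q⁺ lemma: whenever x ∈ ker Q⁻ ∩ ker Q⁺ and x ∈ im Q⁻ ∪ im Q⁺, then x ∈ im (Q⁻∘Q⁺). Then the inclusion ker Q⁻ ∩ ker Q⁺ ↪ ker Q⁻ induces a linear isomorphism (ker Q⁻ ∩ ker Q⁺)/im(Q⁻Q⁺) ≅ ker Q⁻ / im Q⁻. -/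
/-- Under the `Q⁻Q⁺` lemma, the inclusion `ker Q⁻ ∩ ker Q⁺ ↪ ker Q⁻` induces an
isomorphism `(ker Q⁻ ∩ ker Q⁺)/im(Q⁻Q⁺) ≅ ker Q⁻/im Q⁻`, expressed as: the
composite with the quotient map is surjective and has kernel `im(Q⁻Q⁺)`. -/
theorem stmt4 {V : Type*} [AddCommGroup V] [Module ℂ V]
    (Qm Qp : V →ₗ[ℂ] V)
    (hm : Qm ∘ₗ Qm = 0) (hp : Qp ∘ₗ Qp = 0)
    (hanti : Qm ∘ₗ Qp + Qp ∘ₗ Qm = 0)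
    (hddc : ∀ x : V, Qm x = 0 → Qp x = 0 →
      ((∃ x', x = Qm x') ∨ (∃ x', x = Qp x')) → ∃ xt, x = Qm (Qp xt))
    (K : Submodule ℂ V) (hK : K = LinearMap.ker Qm ⊓ LinearMap.ker Qp)
    (hKle : K ≤ LinearMap.ker Qm)
    (f : K →ₗ[ℂ]
      (LinearMap.ker Qm ⧸ ((LinearMap.range Qm).comap (LinearMap.ker Qm).subtype)))
    (hf : f = ((LinearMap.range Qm).comap (LinearMap.ker Qm).subtype).mkQ ∘ₗ
      Submodule.inclusion hKle) :
    Function.Surjective f ∧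
      LinearMap.ker f = (LinearMap.range (Qm ∘ₗ Qp)).comap K.subtype := by
  have hanti' : ∀ v : V, Qm (Qp v) + Qp (Qm v) = 0 := by
    intro v
    have := LinearMap.congr_fun hanti v
    simpa using this
  have hm' : ∀ v : V, Qm (Qm v) = 0 := fun v => by
    have := LinearMap.congr_fun hm v; simpa using this
  have hp' : ∀ v : V, Qp (Qp v) = 0 := fun v => by
    have := LinearMap.congr_fun hp v; simpa using this
  constructor
  · intro y
    obtain ⟨x, rfl⟩ := Submodule.Quotient.mk_surjective _ y
    have hx : Qm (x : V) = 0 := x.2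
    have h1 : Qm (Qp (x : V)) = 0 := by
      have := hanti' (x : V); rw [hx, map_zero, add_zero] at this; exact this
    obtain ⟨xt, hxt⟩ := hddc (Qp (x : V)) h1 (hp' _) (Or.inr ⟨x, rfl⟩)
    have hk1 : Qm ((x : V) + Qm xt) = 0 := by rw [map_add, hx, hm', add_zero]
    have hk2 : Qp ((x : V) + Qm xt) = 0 := by
      have := hanti' xt
      rw [← hxt] at this
      rw [map_add]
      exact this
    refine ⟨⟨(x : V) + Qm xt, hK ▸ ⟨hk1, hk2⟩⟩, ?_⟩
    rw [hf]
    simp only [LinearMap.comp_apply, Submodule.mkQ_apply]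
    rw [Submodule.Quotient.eq]
    refine Submodule.mem_comap.mpr ⟨xt, ?_⟩
    simp [Submodule.inclusion]
  · ext k
    have hkmem : (k : V) ∈ LinearMap.ker Qm ⊓ LinearMap.ker Qp := hK ▸ k.2
    simp only [LinearMap.mem_ker, hf, LinearMap.comp_apply, Submodule.mkQ_apply,
      Submodule.Quotient.mk_eq_zero, Submodule.mem_comap, LinearMap.mem_range,
      Submodule.coe_subtype]
    constructor
    · rintro ⟨x', hx'⟩
      have hkv : (k : V) = Qm x' := by
        have : ((Submodule.inclusion hKle k : LinearMap.ker Qm) : V) = (k : V) := rfl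
        rw [← this, hx']
      obtain ⟨xt, hxt⟩ := hddc (k : V) hkmem.1 hkmem.2 (Or.inl ⟨x', hkv⟩)
      exact ⟨xt, hxt.symm⟩
    · rintro ⟨xt, hxt⟩
      refine ⟨Qp xt, ?_⟩
      rw [Submodule.coe_inclusion]
      exact hxt
end

section
/- (Formality from the Q⁻Q⁺ lemma: surjectivity on cohomology for the inclusion) Let V be a vector space with anticommuting square-zero operators Q⁻, Q⁺ satisfying the Q⁻Q⁺ lemma. Then the inclusion of the subcomplex (ker Q⁺, Q⁻) into (V, Q⁻) induces an isomorphism on Q⁻-cohomology: (ker Q⁻ ∩ ker Q⁺)/(Q⁻(ker Q⁺)) ≅ ker Q⁻ / im Q⁻. -/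
/-- Formality (inclusion map): under the `Q⁻Q⁺` lemma, the inclusion of the
subcomplex `(ker Q⁺, Q⁻)` into `(V, Q⁻)` induces an isomorphism on
`Q⁻`-cohomology: `(ker Q⁻ ∩ ker Q⁺)/(Q⁻(ker Q⁺)) ≅ ker Q⁻/im Q⁻`, expressed as:
the composite with the quotient map is surjective with kernel `Q⁻(ker Q⁺)`. -/
theorem stmt5 {V : Type*} [AddCommGroup V] [Module ℂ V]
    (Qm Qp : V →ₗ[ℂ] V)
    (hm : Qm ∘ₗ Qm = 0) (hp : Qp ∘ₗ Qp = 0)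
    (hanti : Qm ∘ₗ Qp + Qp ∘ₗ Qm = 0)
    (hddc : ∀ x : V, Qm x = 0 → Qp x = 0 →
      ((∃ x', x = Qm x') ∨ (∃ x', x = Qp x')) → ∃ xt, x = Qm (Qp xt))
    (K : Submodule ℂ V) (hK : K = LinearMap.ker Qm ⊓ LinearMap.ker Qp)
    (hKle : K ≤ LinearMap.ker Qm)
    (f : K →ₗ[ℂ]
      (LinearMap.ker Qm ⧸ ((LinearMap.range Qm).comap (LinearMap.ker Qm).subtype)))
    (hf : f = ((LinearMap.range Qm).comap (LinearMap.ker Qm).subtype).mkQ ∘ₗ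
      Submodule.inclusion hKle) :
    Function.Surjective f ∧
      LinearMap.ker f = ((LinearMap.ker Qp).map Qm).comap K.subtype := by
  have hmm : ∀ v, Qm (Qm v) = 0 := fun v => congrFun (congrArg DFunLike.coe hm) v
  have hpp : ∀ v, Qp (Qp v) = 0 := fun v => congrFun (congrArg DFunLike.coe hp) v
  have hac : ∀ v, Qm (Qp v) + Qp (Qm v) = 0 := fun v =>
    congrFun (congrArg DFunLike.coe hanti) v
  constructor
  · intro q
    obtain ⟨⟨x, hx⟩, rfl⟩ := Submodule.mkQ_surjective _ q
    have hx' : Qm x = 0 := hx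
    -- Qp x is Qm-closed, Qp-closed, Qp-exact
    have h1 : Qm (Qp x) = 0 := by
      have := hac x; rw [hx'] at this; simpa using this
    obtain ⟨t, ht⟩ := hddc (Qp x) h1 (hpp x) (Or.inr ⟨x, rfl⟩)
    refine ⟨⟨x + Qm t, ?_⟩, ?_⟩
    · rw [hK]
      refine ⟨by simp [hx', hmm t], ?_⟩
      have h2 : Qp (Qm t) = -Qm (Qp t) := eq_neg_of_add_eq_zero_right (hac t)
      show Qp (x + Qm t) = 0
      rw [map_add, h2, ← ht]
      simp
    · rw [hf]
      simp only [LinearMap.comp_apply]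
      rw [Submodule.mkQ_apply, Submodule.mkQ_apply, Submodule.Quotient.eq]
      exact ⟨t, by simp [Submodule.inclusion]⟩
  · ext ⟨x, hx⟩
    rw [hf]
    simp only [LinearMap.mem_ker, LinearMap.comp_apply, Submodule.mem_comap,
      Submodule.mkQ_apply, Submodule.Quotient.mk_eq_zero, Submodule.mem_map]
    constructor
    · intro h
      obtain ⟨x', hx'⟩ := h
      have hxm : Qm x = 0 := hKle hx
      have hxp : Qp x = 0 := (hK ▸ hx).2
      obtain ⟨xt, hxt⟩ := hddc x hxm hxp (Or.inl ⟨x', by simpa using hx'.symm⟩)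
      exact ⟨Qp xt, hpp xt, hxt.symm⟩
    · rintro ⟨z, hz, hzx⟩
      exact ⟨z, by simpa [Submodule.inclusion] using hzx⟩
end

section
/- (Formality from the Q⁻Q⁺ lemma: the projection map) Let V be a vector space with anticommuting square-zero operators Q⁻, Q⁺ satisfying the Q⁻Q⁺ lemma. Then the projection π : ker Q⁺ → H(V, Q⁺) = ker Q⁺/im Q⁺ induces an isomorphism from the Q⁻-cohomology of (ker Q⁺, Q⁻) to H(V, Q⁺), where the induced differential Q⁻* on H(V, Q⁺) is zero. -/
/-- Formality (projection map): under the `Q⁻Q⁺` lemma, the differential induced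
by `Q⁻` on `H(V, Q⁺) = ker Q⁺/im Q⁺` is zero (i.e. `Q⁻(ker Q⁺) ⊆ im Q⁺`), and the
projection `π : ker Q⁺ → H(V, Q⁺)` induces an isomorphism
`(ker Q⁻ ∩ ker Q⁺)/(Q⁻(ker Q⁺)) ≅ ker Q⁺/im Q⁺`, expressed as: the composite of
the inclusion with the quotient map is surjective with kernel `Q⁻(ker Q⁺)`. -/
theorem stmt6 {V : Type*} [AddCommGroup V] [Module ℂ V]
    (Qm Qp : V →ₗ[ℂ] V)
    (hm : Qm ∘ₗ Qm = 0) (hp : Qp ∘ₗ Qp = 0)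
    (hanti : Qm ∘ₗ Qp + Qp ∘ₗ Qm = 0)
    (hddc : ∀ x : V, Qm x = 0 → Qp x = 0 →
      ((∃ x', x = Qm x') ∨ (∃ x', x = Qp x')) → ∃ xt, x = Qm (Qp xt))
    (K : Submodule ℂ V) (hK : K = LinearMap.ker Qm ⊓ LinearMap.ker Qp)
    (hKle : K ≤ LinearMap.ker Qp)
    (g : K →ₗ[ℂ]
      (LinearMap.ker Qp ⧸ ((LinearMap.range Qp).comap (LinearMap.ker Qp).subtype)))
    (hg : g = ((LinearMap.range Qp).comap (LinearMap.ker Qp).subtype).mkQ ∘ₗ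
      Submodule.inclusion hKle) :
    (∀ x : V, Qp x = 0 → ∃ y : V, Qm x = Qp y) ∧
    Function.Surjective g ∧
      LinearMap.ker g = ((LinearMap.ker Qp).map Qm).comap K.subtype := by
  have hm' : ∀ v, Qm (Qm v) = 0 := fun v => by
    simpa using LinearMap.congr_fun hm v
  have hp' : ∀ v, Qp (Qp v) = 0 := fun v => by
    simpa using LinearMap.congr_fun hp v
  have hanti' : ∀ v, Qm (Qp v) = - Qp (Qm v) := fun v => by
    have := LinearMap.congr_fun hanti v
    simp only [LinearMap.add_apply, LinearMap.comp_apply, LinearMap.zero_apply] at this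
    exact eq_neg_of_add_eq_zero_left this
  -- key: for x ∈ ker Qp, Qm x = Qm (Qp t) for some t
  have key : ∀ x : V, Qp x = 0 → ∃ t, Qm x = Qm (Qp t) := by
    intro x hx
    exact hddc (Qm x) (hm' x) (by rw [← neg_eq_zero, ← hanti' x, hx, map_zero])
      (Or.inl ⟨x, rfl⟩)
  have part1 : ∀ x : V, Qp x = 0 → ∃ y : V, Qm x = Qp y := by
    intro x hx
    obtain ⟨t, ht⟩ := key x hx
    exact ⟨-Qm t, by rw [ht, hanti' t, map_neg]⟩
  refine ⟨part1, ?_, ?_⟩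
  · -- surjectivity
    intro q
    obtain ⟨⟨x, hx⟩, rfl⟩ := Submodule.mkQ_surjective _ q
    have hx' : Qp x = 0 := hx
    obtain ⟨t, ht⟩ := key x hx'
    have hx1 : x - Qp t ∈ K := by
      rw [hK]
      refine ⟨?_, ?_⟩
      · show Qm (x - Qp t) = 0
        rw [map_sub, ht, sub_self]
      · show Qp (x - Qp t) = 0
        rw [map_sub, hx', hp', sub_self]
    refine ⟨⟨x - Qp t, hx1⟩, ?_⟩
    rw [hg]
    simp only [LinearMap.comp_apply, Submodule.mkQ_apply]
    rw [Submodule.Quotient.eq]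
    refine Submodule.mem_comap.mpr ⟨-t, ?_⟩
    simp
  · -- kernel
    ext ⟨x, hxK⟩
    have hxK' : x ∈ LinearMap.ker Qm ⊓ LinearMap.ker Qp := by rw [← hK]; exact hxK
    have hxm : Qm x = 0 := hxK'.1
    have hxp : Qp x = 0 := hxK'.2
    constructor
    · intro h
      have h0 : g ⟨x, hxK⟩ = 0 := h
      rw [hg] at h0
      simp only [LinearMap.comp_apply, Submodule.mkQ_apply,
        Submodule.Quotient.mk_eq_zero, Submodule.mem_comap] at h0
      obtain ⟨w, hw⟩ := h0
      obtain ⟨xt, hxt⟩ := hddc x hxm hxp (Or.inr ⟨w, hw.symm⟩)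
      exact ⟨Qp xt, hp' xt, hxt.symm⟩
    · rintro ⟨w, hw, hwx⟩
      have hw' : Qp w = 0 := hw
      obtain ⟨y, hy⟩ := part1 w hw'
      have h0 : (x : V) ∈ LinearMap.range Qp := ⟨y, by rw [← hy, hwx]; rfl⟩
      show g ⟨x, hxK⟩ = 0
      rw [hg]
      simp only [LinearMap.comp_apply, Submodule.mkQ_apply,
        Submodule.Quotient.mk_eq_zero, Submodule.mem_comap]
      exact h0
end

section
/- (Graded-unitary spin-statistics) Let V be a complex super vector space with a bilinear form (−,−) satisfying (x,y) = (−1)^{|x||y| + 2h}(y,x) on vectors of conformal weight h, an anti-linear map ρ with ρ∘ρ = s (the parity operator, acting by (−1)^{2R} on vectors of R-grade R), and define ⟨x|y⟩ := i^{2R_x}(ρ(x), y) on homogeneous vectors. If ⟨−|−⟩ is positive-definite, then every nonzero homogeneous x with conformal weight h and R-grade R satisfies (−1)^{|x|} = (−1)^{2(h+R)}. -/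
/-- Graded-unitary spin-statistics: for a nonzero homogeneous vector `x` of
(twice-)conformal weight `th = 2h`, (twice-)R-grade `tR = 2R` and Grassmann
parity `ε`, positive-definiteness of `⟨x|y⟩ = i^{2R}(ρ(x), y)` together with the
graded symmetry of the bilinear form and `ρ∘ρ = s` forces
`(-1)^{|x|} = (-1)^{2(h+R)}`. -/
theorem stmt9 {V : Type*} [AddCommGroup V] [Module ℂ V]
    (B : V →ₗ[ℂ] V →ₗ[ℂ] ℂ) (ρ : V → V)
    (hρadd : ∀ a b : V, ρ (a + b) = ρ a + ρ b)
    (hρsmul : ∀ (c : ℂ) (a : V), ρ (c • a) = (starRingEnd ℂ c) • ρ a)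
    (x : V) (hx : x ≠ 0)
    (ε th tR : ℤ)
    (hρ2 : ρ (ρ x) = ((-1 : ℂ) ^ tR) • x)
    (hsym : B x (ρ x) = ((-1 : ℂ) ^ (ε * ε + th)) * B (ρ x) x)
    (hpos1 : 0 < (Complex.I ^ tR * B (ρ x) x).re ∧
      (Complex.I ^ tR * B (ρ x) x).im = 0)
    (hpos2 : 0 < (Complex.I ^ tR * B (ρ (ρ x)) (ρ x)).re ∧
      (Complex.I ^ tR * B (ρ (ρ x)) (ρ x)).im = 0) :
    (-1 : ℂ) ^ ε = (-1 : ℂ) ^ (th + tR) := by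
  have hne : (-1 : ℂ) ≠ 0 := by norm_num
  -- rewrite hpos2 using hρ2 and hsym
  have h2 : Complex.I ^ tR * B (ρ (ρ x)) (ρ x)
      = (-1 : ℂ) ^ (tR + (ε * ε + th)) * (Complex.I ^ tR * B (ρ x) x) := by
    rw [hρ2, map_smul, LinearMap.smul_apply, smul_eq_mul, hsym,
      zpow_add₀ hne tR, zpow_add₀ hne (ε * ε)]
    ring
  set z : ℂ := Complex.I ^ tR * B (ρ x) x with hz
  set n : ℤ := tR + (ε * ε + th) with hn
  -- k = (-1)^n must be 1
  have hk : (-1 : ℂ) ^ n = 1 := by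
    rcases Int.even_or_odd n with he | ho
    · exact he.neg_one_zpow
    · exfalso
      have hk' : (-1 : ℂ) ^ n = -1 := ho.neg_one_zpow
      have := hpos2.1
      rw [h2, hk'] at this
      simp only [neg_one_mul, Complex.neg_re] at this
      linarith [hpos1.1]
  -- parity of n forces the result
  have hεε : (-1 : ℂ) ^ (ε * ε) = (-1 : ℂ) ^ ε := by
    rcases Int.even_or_odd ε with he | ho
    · rw [he.neg_one_zpow, ((he.mul_left ε)).neg_one_zpow]
    · rw [ho.neg_one_zpow, (ho.mul ho).neg_one_zpow]
  calc (-1 : ℂ) ^ ε = (-1 : ℂ) ^ ε * (-1 : ℂ) ^ n := by rw [hk, mul_one]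
    _ = (-1 : ℂ) ^ ε * ((-1 : ℂ) ^ tR * ((-1 : ℂ) ^ (ε * ε) * (-1 : ℂ) ^ th)) := by
        rw [hn, zpow_add₀ hne, zpow_add₀ hne]
    _ = ((-1 : ℂ) ^ ε * (-1 : ℂ) ^ ε) * ((-1 : ℂ) ^ th * (-1 : ℂ) ^ tR) := by
        rw [hεε]; ring
    _ = (-1 : ℂ) ^ (th + tR) := by
        rw [← zpow_add₀ hne, ← zpow_add₀ hne]
        have : Even (ε + ε) := ⟨ε, rfl⟩
        rw [this.neg_one_zpow, one_mul]
end

section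
/- Let V be a vector space with a square-zero operator Q and suppose every element of ker Q ∩ (im Q) satisfying also Q'x = 0 lies in im(QQ') for an anticommuting square-zero Q' (Q⁻Q⁺ lemma with Q = Q⁻, Q' = Q⁺). Then the vertex-algebra-level statement reduces to: the quotient map ker Q⁻ ∩ ker Q⁺ → (ker Q⁻ ∩ ker Q⁺)/im(Q⁻Q⁺) is surjective onto H(V, Q⁻) under the inclusion-induced map, and moreover every Q⁻-cohomology class has a representative annihilated by both Q⁻ and Q⁺. -/
/-- Under the `Q⁻Q⁺` lemma, every `Q⁻`-closed vector can be corrected by a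
`Q⁻`-exact term to a representative annihilated by both `Q⁻` and `Q⁺`; in
particular, the inclusion `ker Q⁻ ∩ ker Q⁺ ↪ ker Q⁻` is surjective onto
`Q⁻`-cohomology. -/
theorem stmt19 {V : Type*} [AddCommGroup V] [Module ℂ V]
    (Qm Qp : V →ₗ[ℂ] V)
    (hm : Qm ∘ₗ Qm = 0) (hp : Qp ∘ₗ Qp = 0)
    (hanti : Qm ∘ₗ Qp + Qp ∘ₗ Qm = 0)
    (hddc : ∀ x : V, Qm x = 0 → Qp x = 0 →
      ((∃ a, x = Qm a) ∨ (∃ a, x = Qp a)) → ∃ b, x = Qm (Qp b)) :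
    (∀ y : V, Qm y = 0 → ∃ xt : V, Qp (y + Qm xt) = 0) ∧
    (∀ y : V, Qm y = 0 → ∃ z : V, Qm z = 0 ∧ Qp z = 0 ∧ ∃ w : V, y - z = Qm w) := by
  have hanti' : ∀ v : V, Qm (Qp v) + Qp (Qm v) = 0 := by
    intro v
    have := congrArg (fun f => f v) hanti
    simpa using this
  have key : ∀ y : V, Qm y = 0 → ∃ xt : V, Qp (y + Qm xt) = 0 := by
    intro y hy
    have h1 : Qm (Qp y) = 0 := by
      have := hanti' y
      rw [hy] at this
      simpa using this
    have h2 : Qp (Qp y) = 0 := by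
      have := congrArg (fun f => f y) hp
      simpa using this
    obtain ⟨b, hb⟩ := hddc (Qp y) h1 h2 (Or.inr ⟨y, rfl⟩)
    refine ⟨b, ?_⟩
    have h3 : Qp (Qm b) = -Qp y := by
      have := hanti' b
      rw [← hb] at this
      rw [eq_neg_iff_add_eq_zero, add_comm]
      exact this
    simp only [map_add, h3]
    abel
  refine ⟨key, fun y hy => ?_⟩
  obtain ⟨xt, hxt⟩ := key y hy
  refine ⟨y + Qm xt, ?_, hxt, ⟨-xt, ?_⟩⟩
  · have := congrArg (fun f => f xt) hm
    simp only [LinearMap.comp_apply, LinearMap.zero_apply] at this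
    simp [hy, this]
  · simp
end
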